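/- arXiv:2109.00409 — 2 statements merged into one kernel-verified Lean document; each statement's English description precedes it below -/
import Mathlib

section
/- Let G be any digraph on a finite vertex set, let 0 ≤ α < 1, and let v be a vertex that does not lie on any strong component of G, i.e., there is no closed directed walk of positive length through v (equivalently, v lies on no directed cycle of G). Then α·d⁺(v) is an eigenvalue of A_α(G), i.e., a root of the characteristic polynomial of A_α(G). -/
open Polynomial Matrix Finset

/-- The outdegree of a vertex `v` of the digraph with adjacency matrix `A`. -/
noncomputable def outdeg {V : Type*} [Fintype V] (A : Matrix V V ℝ) (v : V) : ℝ := ∑ w, A v w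

/-- The `A_α`-matrix `α·D⁺ + (1-α)·A` of a digraph with adjacency matrix `A`. -/
noncomputable def Aalpha {V : Type*} [Fintype V] [DecidableEq V] (α : ℝ) (A : Matrix V V ℝ) :
    Matrix V V ℝ :=
  α • Matrix.diagonal (outdeg A) + (1 - α) • A

/-- The spectral radius of a real square matrix: the maximum modulus of its complex
eigenvalues (roots of the characteristic polynomial over `ℂ`). -/
noncomputable def specRad {V : Type*} [Fintype V] [DecidableEq V] (M : Matrix V V ℝ) : ℝ :=
  sSup {x : ℝ | ∃ z : ℂ, (M.map ((↑) : ℝ → ℂ)).charpoly.IsRoot z ∧ ‖z‖ = x}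

/-- The `A_α` energy of a digraph: the sum of the squares of the eigenvalues of its
`A_α`-matrix, equivalently `trace (A_α(G)²)`. -/
noncomputable def Ealpha {V : Type*} [Fintype V] [DecidableEq V] (α : ℝ) (A : Matrix V V ℝ) : ℝ :=
  Matrix.trace (Aalpha α A * Aalpha α A)

/-!
Let `S` be the set of vertices reachable from `v` by a walk of positive length. No arc leaves
`S`, so `λ - A_α(G)` is block triangular with respect to `S` and its complement. Since `v ∉ S`,
the row of `v` lies in the complementary block, and for `λ = α·d⁺(v)` it vanishes there: its
diagonal entry is `λ - α·d⁺(v)` and every out-neighbour of `v` lies in `S`.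
-/

theorem Matrix.det_eq_zero_of_rows_vanish_off {n R : Type*} [Fintype n] [DecidableEq n]
    [CommRing R] (N : Matrix n n R) (p : n → Prop) [DecidablePred p]
    (hclosed : ∀ i, p i → ∀ j, ¬ p j → N i j = 0) {v : n} (hv : ¬ p v)
    (hrow : ∀ j, ¬ p j → N v j = 0) :
    N.det = 0 := by
  rw [twoBlockTriangular_det' N p hclosed,
    det_eq_zero_of_row_eq_zero (A := toSquareBlockProp N fun i => ¬ p i) ⟨v, hv⟩
      fun j => hrow j j.2, mul_zero]

theorem Aalpha_apply_ne {V : Type*} [Fintype V] [DecidableEq V] (α : ℝ) (A : Matrix V V ℝ)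
    {i j : V} (hij : i ≠ j) : Aalpha α A i j = (1 - α) * A i j := by
  simp [Aalpha, hij]

theorem Aalpha_apply_self {V : Type*} [Fintype V] [DecidableEq V] (α : ℝ) (A : Matrix V V ℝ)
    (i : V) : Aalpha α A i i = α * outdeg A i + (1 - α) * A i i := by
  simp [Aalpha]

theorem eq_zero_of_reflTransGen_of_not_transGen {V : Type*} {A : Matrix V V ℝ}
    (h01 : ∀ u w, A u w = 0 ∨ A u w = 1) {v u w : V}
    (hu : Relation.ReflTransGen (fun a b => A a b = 1) v u)
    (hw : ¬ Relation.TransGen (fun a b => A a b = 1) v w) :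
    A u w = 0 :=
  (h01 u w).resolve_right fun h => hw (.tail' hu h)

theorem stmt1_general {V : Type*} [Fintype V] [DecidableEq V] (A : Matrix V V ℝ)
    (h01 : ∀ u v, A u v = 0 ∨ A u v = 1)
    (α : ℝ) (v : V)
    (hv : ¬ Relation.TransGen (fun a b => A a b = 1) v v) :
    ((Aalpha α A).map ((↑) : ℝ → ℂ)).charpoly.IsRoot ((α * outdeg A v : ℝ) : ℂ) := by
  classical
  suffices h : (Aalpha α A).charpoly.IsRoot (α * outdeg A v) by
    have h' := h.map (f := Complex.ofRealHom)
    rwa [← charpoly_map] at h'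
  rw [IsRoot, eval_charpoly]
  set reach : V → Prop := Relation.TransGen (fun a b => A a b = 1) v
  have hoff : ∀ {u w}, u ≠ w → (scalar V (α * outdeg A v) - Aalpha α A) u w = -((1 - α) * A u w) :=
    fun huw => by simp [Aalpha_apply_ne α A huw, huw]
  refine det_eq_zero_of_rows_vanish_off _ reach (fun u hu w hw => ?_) hv fun w hw => ?_
  · rw [hoff (by rintro rfl; exact hw hu),
      eq_zero_of_reflTransGen_of_not_transGen h01 hu.to_reflTransGen hw, mul_zero, neg_zero]
  · have hvw := eq_zero_of_reflTransGen_of_not_transGen h01 .refl hw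
    obtain rfl | hne := eq_or_ne v w
    · simp [Aalpha_apply_self, hvw]
    · rw [hoff hne, hvw, mul_zero, neg_zero]

/-- If a vertex `v` of a digraph lies on no strong component (no closed directed walk of
positive length passes through `v`), then `α·d⁺(v)` is an eigenvalue of `A_α(G)`. -/
theorem stmt1 {V : Type*} [Fintype V] [DecidableEq V] (A : Matrix V V ℝ)
    (h01 : ∀ u v, A u v = 0 ∨ A u v = 1) (hloop : ∀ v, A v v = 0)
    (α : ℝ) (hα0 : 0 ≤ α) (hα1 : α < 1) (v : V)
    (hv : ¬ Relation.TransGen (fun a b => A a b = 1) v v) :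
    ((Aalpha α A).map ((↑) : ℝ → ℂ)).charpoly.IsRoot ((α * outdeg A v : ℝ) : ℂ) :=
  stmt1_general A h01 α v hv
end

section
/- Let G ∈ 𝒢_n^m with strong-component vertex set S, within-S outdegrees d*(s), and 0 ≤ α < 1. Then E_α(G) ≥ α²·Σ_{s∈S}(d*(s))² + α²(n−m) + (1−α)²·c₂(G*). Moreover, if 0 < α < 1, equality holds if and only if each hung tree is an in-tree with root s: within every fiber r⁻¹(s), the vertex s has outdegree 0 inside the fiber and every other vertex of the fiber has outdegree exactly 1 inside the fiber. -/
open Polynomial Matrix Finset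

/-- The outdegree of `s` within the vertex set `S` (the within-`S` outdegree `d*(s)`). -/
noncomputable def dStar {V : Type*} [Fintype V] (A : Matrix V V ℝ) (S : Finset V) (s : V) : ℝ :=
  ∑ v ∈ S, A s v

/-- The size `n_s` of the fiber `r⁻¹(s)`. -/
def fibCard {V : Type*} [Fintype V] [DecidableEq V] (r : V → V) (s : V) : ℕ :=
  (Finset.univ.filter (fun v => r v = s)).card

/-- The underlying undirected graph of the induced subdigraph on the fiber `r⁻¹(s)`. -/
def fiberGraph {V : Type*} (A : Matrix V V ℝ) (r : V → V) (s : V) :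
    SimpleGraph {v : V // r v = s} where
  Adj u w := u ≠ w ∧ (A u.1 w.1 = 1 ∨ A w.1 u.1 = 1)
  symm := ⟨fun _ _ h => ⟨h.1.symm, h.2.symm⟩⟩
  loopless := ⟨fun _ h => h.1 rfl⟩

/-- The principal submatrix of `A` with rows and columns indexed by `S`. -/
def subm {V : Type*} (A : Matrix V V ℝ) (S : Finset V) :
    Matrix {v : V // v ∈ S} {v : V // v ∈ S} ℝ :=
  A.submatrix (fun x => x.1) (fun x => x.1)

/-- `c₂(G*) = trace(A*²)`, the number of closed walks of length 2 in the strong component. -/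
noncomputable def c2star {V : Type*} [Fintype V] [DecidableEq V] (A : Matrix V V ℝ)
    (S : Finset V) : ℝ :=
  Matrix.trace (subm A S * subm A S)

/-- Membership in the class `𝒢_n^m`: `A` is the adjacency matrix of a digraph of order `n`
with a unique strong component on the vertex set `S` of order `m`, with a directed tree
(the fiber `r⁻¹(s)`) hung on each vertex `s ∈ S`. -/
structure IsGnm {V : Type*} [Fintype V] [DecidableEq V] (A : Matrix V V ℝ) (S : Finset V)
    (r : V → V) (n m : ℕ) : Prop where
  zero_one : ∀ u v, A u v = 0 ∨ A u v = 1
  loopless : ∀ v, A v v = 0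
  card_V : Fintype.card V = n
  card_S : S.card = m
  two_le_m : 2 ≤ m
  m_lt_n : m < n
  strong : ∀ u ∈ S, ∀ v ∈ S, Relation.ReflTransGen (fun a b => a ∈ S ∧ b ∈ S ∧ A a b = 1) u v
  r_mem : ∀ v, r v ∈ S
  r_fix : ∀ s ∈ S, r s = s
  arc_cases : ∀ u v, A u v = 1 → (u ∈ S ∧ v ∈ S) ∨ r u = r v
  fiber_no_symm : ∀ u v, r u = r v → A u v = 1 → A v u = 0
  fiber_tree : ∀ s ∈ S, (fiberGraph A r s).IsTree

/-- Every hung tree is an in-tree with root at its vertex of `S`: inside each fiber the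
root has outdegree `0` and every other vertex has outdegree `1`. -/
def InTrees {V : Type*} [Fintype V] [DecidableEq V] (A : Matrix V V ℝ) (S : Finset V)
    (r : V → V) : Prop :=
  (∀ v, v ∉ S → (∑ w ∈ Finset.univ.filter (fun w => r w = r v), A v w) = 1) ∧
  (∀ s ∈ S, (∑ w ∈ Finset.univ.filter (fun w => r w = s), A s w) = 0)

/-- All hung trees are trivial except the one at `v`, which is an out-star with centre `v`. -/
def OutStarAt {V : Type*} [Fintype V] [DecidableEq V] (A : Matrix V V ℝ) (S : Finset V)
    (r : V → V) (v : V) : Prop :=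
  (∀ s ∈ S, s ≠ v → fibCard r s = 1) ∧ (∀ u w, r u = v → A u w = 1 → u = v)

theorem sum_fromRel_eq_card_sub_one {W : Type*} [Fintype W] {B : Matrix W W ℝ}
    (h01 : ∀ u v, B u v = 0 ∨ B u v = 1) (hloop : ∀ v, B v v = 0)
    (hanti : ∀ u v, B u v = 1 → B v u = 0)
    (htree : (SimpleGraph.fromRel fun u v => B u v = 1).IsTree) :
    ∑ u, ∑ v, B u v = (Fintype.card W : ℝ) - 1 := by
  classical
  set G := SimpleGraph.fromRel fun u v => B u v = 1
  have hadj : ∀ u v, B u v + B v u = if G.Adj u v then 1 else 0 := by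
    intro u v
    by_cases huv : u = v
    · subst huv; simp [G, hloop]
    rcases h01 u v with h | h <;> rcases h01 v u with h' | h' <;>
      simp_all [G, SimpleGraph.fromRel_adj]
  have hswap : ∑ u, ∑ v, B u v = ∑ u, ∑ v, B v u := Finset.sum_comm
  have hsum : 2 * ∑ u, ∑ v, B u v = 2 * (#G.edgeFinset : ℝ) :=
    calc 2 * ∑ u, ∑ v, B u v = ∑ u, ∑ v, (B u v + B v u) := by
          rw [two_mul]
          nth_rw 2 [hswap]
          simp only [← Finset.sum_add_distrib]
      _ = ∑ u, (G.degree u : ℝ) := by simp only [hadj, SimpleGraph.degree_eq_sum_if_adj]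
      _ = 2 * (#G.edgeFinset : ℝ) := by exact_mod_cast G.sum_degrees_eq_twice_card_edges
  rw [← htree.card_edgeFinset]
  push_cast
  linarith

section

variable {V : Type*} [Fintype V] [DecidableEq V]

theorem Ealpha_eq_of_loopless (α : ℝ) {A : Matrix V V ℝ} (hA : ∀ v, A v v = 0) :
    Ealpha α A = α ^ 2 * ∑ v, outdeg A v ^ 2 + (1 - α) ^ 2 * trace (A * A) := by
  have hDA : trace (diagonal (outdeg A) * A) = 0 := by
    simp [trace, diagonal_mul, hA]
  simp only [Ealpha, Aalpha, add_mul, mul_add, smul_mul_smul_comm, trace_add, trace_smul,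
    diagonal_mul_diagonal, trace_diagonal, trace_mul_comm A, hDA, smul_eq_mul]
  simp only [mul_zero, add_zero, sq, Finset.mul_sum]
  ring

theorem trace_mul_self_eq_c2star {A : Matrix V V ℝ} {S : Finset V}
    (h : ∀ u v, u ∉ S → A u v * A v u = 0) : trace (A * A) = c2star A S := by
  have hS : ∀ u, ∑ v, A u v * A v u = ∑ v ∈ S, A u v * A v u := fun u =>
    (Finset.sum_subset (Finset.subset_univ S) fun v _ hv => by rw [mul_comm]; exact h v u hv).symm
  calc trace (A * A) = ∑ u, ∑ v, A u v * A v u := by simp [trace, mul_apply]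
    _ = ∑ u ∈ S, ∑ v ∈ S, A u v * A v u := by
      simp only [hS]
      exact (Finset.sum_subset (Finset.subset_univ S) fun u _ hu =>
        Finset.sum_eq_zero fun v _ => h u v hu).symm
    _ = c2star A S := by
      simp only [c2star, subm, trace, Matrix.diag, mul_apply, submatrix_apply]
      rw [← Finset.sum_coe_sort S]
      exact Finset.sum_congr rfl fun u _ => (Finset.sum_coe_sort S _).symm

theorem sum_sq_ite_add_eq {S : Finset V} (d f : V → ℝ) (hf : ∑ v, f v = #Sᶜ) :
    ∑ v, ((if v ∈ S then d v else 0) + f v) ^ 2 =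
      ∑ s ∈ S, d s ^ 2 + #Sᶜ +
        (∑ s ∈ S, (2 * (d s - 1) * f s + f s ^ 2) + ∑ v ∈ Sᶜ, (f v - 1) ^ 2) := by
  have hin : ∑ s ∈ S, ((if s ∈ S then d s else 0) + f s) ^ 2 =
      ∑ s ∈ S, d s ^ 2 + ∑ s ∈ S, (2 * (d s - 1) * f s + f s ^ 2)
        + 2 * ∑ s ∈ S, f s := by
    simp only [Finset.mul_sum, ← Finset.sum_add_distrib]
    exact Finset.sum_congr rfl fun s hs => by rw [if_pos hs]; ring
  have hout : ∑ v ∈ Sᶜ, ((if v ∈ S then d v else 0) + f v) ^ 2 =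
      ∑ v ∈ Sᶜ, (f v - 1) ^ 2 + 2 * ∑ v ∈ Sᶜ, f v - #Sᶜ := by
    simp only [Finset.card_eq_sum_ones, Nat.cast_sum, Nat.cast_one, Finset.mul_sum,
      ← Finset.sum_add_distrib, ← Finset.sum_sub_distrib]
    exact Finset.sum_congr rfl fun v hv => by rw [if_neg (Finset.mem_compl.1 hv)]; ring
  rw [← Finset.sum_add_sum_compl S] at hf ⊢
  rw [hin, hout]
  linarith

noncomputable def fiberOutdeg (A : Matrix V V ℝ) (r : V → V) (v : V) : ℝ :=
  ∑ w ∈ univ.filter (fun w => r w = r v), A v w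

noncomputable def treeDefect (A : Matrix V V ℝ) (S : Finset V) (r : V → V) : ℝ :=
  ∑ s ∈ S, (2 * (dStar A S s - 1) * fiberOutdeg A r s + fiberOutdeg A r s ^ 2) +
    ∑ v ∈ Sᶜ, (fiberOutdeg A r v - 1) ^ 2

namespace IsGnm

variable {A : Matrix V V ℝ} {S : Finset V} {r : V → V} {n m : ℕ}

theorem nonneg (hG : IsGnm A S r n m) (u v : V) : 0 ≤ A u v := by
  rcases hG.zero_one u v with h | h <;> simp [h]

theorem mul_swap_eq_zero (hG : IsGnm A S r n m) (u v : V) (hu : u ∉ S) :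
    A u v * A v u = 0 := by
  rcases hG.zero_one u v with h | h
  · simp [h]
  rcases hG.arc_cases u v h with huv | hr
  · exact absurd huv.1 hu
  · rw [hG.fiber_no_symm u v hr h, mul_zero]

theorem apply_eq_add (hG : IsGnm A S r n m) (v w : V) :
    A v w = (if v ∈ S ∧ w ∈ S then A v w else 0) + (if r w = r v then A v w else 0) := by
  by_cases hr : r w = r v
  · by_cases hvw : v ∈ S ∧ w ∈ S
    · obtain rfl : w = v := by rw [← hG.r_fix w hvw.2, hr, hG.r_fix v hvw.1]
      simp [hG.loopless]
    · simp [hvw, hr]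
  rcases hG.zero_one v w with h | h
  · simp [h]
  rcases hG.arc_cases v w h with hvw | hr'
  · simp [hvw, hr]
  · exact absurd hr'.symm hr

theorem outdeg_eq (hG : IsGnm A S r n m) (v : V) :
    outdeg A v = (if v ∈ S then dStar A S v else 0) + fiberOutdeg A r v := by
  rw [outdeg, Finset.sum_congr rfl fun w _ => hG.apply_eq_add v w, Finset.sum_add_distrib]
  by_cases hv : v ∈ S <;> simp [hv, dStar, fiberOutdeg, Finset.sum_filter]

theorem sum_fiberOutdeg_fiber (hG : IsGnm A S r n m) {s : V} (hs : s ∈ S) :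
    ∑ v ∈ univ.filter (fun v => r v = s), fiberOutdeg A r v = (fibCard r s : ℝ) - 1 := by
  have hB := sum_fromRel_eq_card_sub_one (B := A.submatrix (Subtype.val : {v // r v = s} → V)
    Subtype.val) (fun u v => hG.zero_one u v) (fun v => hG.loopless v)
    (fun u v => hG.fiber_no_symm u v (u.2.trans v.2.symm)) (hG.fiber_tree s hs)
  rw [fibCard, ← Fintype.card_subtype, ← hB,
    Finset.sum_subtype _ (p := fun v => r v = s) (by simp)]
  refine Finset.sum_congr rfl fun v _ => ?_
  rw [fiberOutdeg, v.2, Finset.sum_subtype _ (p := fun v => r v = s) (by simp)]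
  rfl

theorem sum_fiberOutdeg (hG : IsGnm A S r n m) : ∑ v, fiberOutdeg A r v = #Sᶜ := by
  rw [← Finset.sum_fiberwise_of_maps_to (fun v _ => hG.r_mem v),
    Finset.sum_congr rfl fun s hs => hG.sum_fiberOutdeg_fiber hs, Finset.sum_sub_distrib,
    Finset.card_compl, Nat.cast_sub (Finset.card_le_univ S), ← Finset.card_univ,
    Finset.card_eq_sum_card_fiberwise (fun v _ => hG.r_mem v)]
  simp [fibCard]

theorem one_le_dStar (hG : IsGnm A S r n m) {s : V} (hs : s ∈ S) : 1 ≤ dStar A S s := by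
  obtain ⟨t, ht, hts⟩ := Finset.exists_mem_ne (hG.card_S ▸ hG.two_le_m) s
  rcases (hG.strong s hs t ht).cases_head with rfl | ⟨c, ⟨-, hc, hsc⟩, -⟩
  · exact absurd rfl hts
  · exact hsc ▸ Finset.single_le_sum (fun v _ => hG.nonneg s v) hc

theorem card_compl_eq (hG : IsGnm A S r n m) : (#Sᶜ : ℝ) = (n : ℝ) - m := by
  rw [Finset.card_compl, Nat.cast_sub (Finset.card_le_univ S), hG.card_V, hG.card_S]

theorem Ealpha_eq (hG : IsGnm A S r n m) (α : ℝ) :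
    Ealpha α A = α ^ 2 * ∑ s ∈ S, dStar A S s ^ 2 + α ^ 2 * ((n : ℝ) - m)
      + (1 - α) ^ 2 * c2star A S + α ^ 2 * treeDefect A S r := by
  rw [Ealpha_eq_of_loopless α hG.loopless, trace_mul_self_eq_c2star hG.mul_swap_eq_zero]
  simp only [hG.outdeg_eq]
  rw [sum_sq_ite_add_eq _ _ hG.sum_fiberOutdeg, hG.card_compl_eq, treeDefect]
  ring

theorem fiberOutdeg_nonneg (hG : IsGnm A S r n m) (v : V) : 0 ≤ fiberOutdeg A r v :=
  Finset.sum_nonneg fun w _ => hG.nonneg v w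

theorem dStar_sub_one_mul_fiberOutdeg_nonneg (hG : IsGnm A S r n m) {s : V} (hs : s ∈ S) :
    0 ≤ 2 * (dStar A S s - 1) * fiberOutdeg A r s := by
  have := hG.one_le_dStar hs
  have := hG.fiberOutdeg_nonneg s
  positivity

theorem treeDefect_root_term_nonneg (hG : IsGnm A S r n m) {s : V} (hs : s ∈ S) :
    0 ≤ 2 * (dStar A S s - 1) * fiberOutdeg A r s + fiberOutdeg A r s ^ 2 :=
  add_nonneg (hG.dStar_sub_one_mul_fiberOutdeg_nonneg hs) (sq_nonneg _)

theorem treeDefect_nonneg (hG : IsGnm A S r n m) : 0 ≤ treeDefect A S r :=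
  add_nonneg (Finset.sum_nonneg fun _ hs => hG.treeDefect_root_term_nonneg hs)
    (Finset.sum_nonneg fun _ _ => sq_nonneg _)

theorem treeDefect_eq_zero_iff (hG : IsGnm A S r n m) :
    treeDefect A S r = 0 ↔ InTrees A S r := by
  rw [treeDefect,
    add_eq_zero_iff_of_nonneg (Finset.sum_nonneg fun _ hs => hG.treeDefect_root_term_nonneg hs)
      (Finset.sum_nonneg fun _ _ => sq_nonneg _),
    Finset.sum_eq_zero_iff_of_nonneg fun _ hs => hG.treeDefect_root_term_nonneg hs,
    Finset.sum_eq_zero_iff_of_nonneg fun _ _ => sq_nonneg _, InTrees, and_comm]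
  refine and_congr ?_ (forall₂_congr fun s hs => ?_)
  · simp [sub_eq_zero, fiberOutdeg]
  · rw [show ∑ w ∈ univ.filter (fun w => r w = s), A s w = fiberOutdeg A r s by
      rw [fiberOutdeg, hG.r_fix s hs]]
    constructor
    · intro h
      have := hG.dStar_sub_one_mul_fiberOutdeg_nonneg hs
      exact (pow_eq_zero_iff two_ne_zero).1 (by linarith [sq_nonneg (fiberOutdeg A r s)])
    · intro h
      rw [h]; ring

end IsGnm

end

theorem stmt11_general {V : Type*} [Fintype V] [DecidableEq V] (A : Matrix V V ℝ) (S : Finset V)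
    (r : V → V) (n m : ℕ) (hG : IsGnm A S r n m) (α : ℝ) :
    α ^ 2 * ∑ s ∈ S, (dStar A S s) ^ 2 + α ^ 2 * ((n : ℝ) - m) + (1 - α) ^ 2 * c2star A S ≤
        Ealpha α A ∧
    (0 < α →
      (Ealpha α A =
          α ^ 2 * ∑ s ∈ S, (dStar A S s) ^ 2 + α ^ 2 * ((n : ℝ) - m)
            + (1 - α) ^ 2 * c2star A S ↔
        InTrees A S r)) := by
  rw [hG.Ealpha_eq α]
  refine ⟨le_add_of_nonneg_right (mul_nonneg (sq_nonneg α) hG.treeDefect_nonneg),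
    fun hα => ?_⟩
  rw [add_eq_left, mul_eq_zero, hG.treeDefect_eq_zero_iff]
  simp [hα.ne']

/-- For `G ∈ 𝒢_n^m`, `E_α(G) ≥ α²·Σ_{s∈S}(d*(s))² + α²(n-m) + (1-α)²·c₂(G*)`; for
`0 < α < 1` equality holds iff each hung tree is an in-tree with root its vertex of `S`. -/
theorem stmt11 {V : Type*} [Fintype V] [DecidableEq V] (A : Matrix V V ℝ) (S : Finset V)
    (r : V → V) (n m : ℕ) (hG : IsGnm A S r n m) (α : ℝ) (hα0 : 0 ≤ α) (hα1 : α < 1) :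
    α ^ 2 * ∑ s ∈ S, (dStar A S s) ^ 2 + α ^ 2 * ((n : ℝ) - m) + (1 - α) ^ 2 * c2star A S ≤
        Ealpha α A ∧
    (0 < α →
      (Ealpha α A =
          α ^ 2 * ∑ s ∈ S, (dStar A S s) ^ 2 + α ^ 2 * ((n : ℝ) - m)
            + (1 - α) ^ 2 * c2star A S ↔
        InTrees A S r)) :=
  stmt11_general A S r n m hG α
end
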